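/- arXiv:1909.00264 — 2 statements merged into one kernel-verified Lean document; each statement's English description precedes it below -/
import Mathlib

section
/- Let z_1, …, z_{2n} be distinct complex numbers, and let P, Q be polynomials with deg P ≤ n+1, deg Q ≤ n such that P'Q − PQ' vanishes at each z_j. Write P = P_1·C and Q = Q_1·C with C monic and P_1, Q_1 coprime. If deg C ≥ 1 and P_1/Q_1 is nonconstant, we reach a contradiction; hence either C = 1 or P/Q is constant. -/
open Polynomial

theorem common_factor_trivial_or_constant (n : ℕ) (hn : 1 ≤ n)
    (P Q P₁ Q₁ D : Polynomial ℂ) (hPne : P ≠ 0) (hQne : Q ≠ 0)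
    (hP : P.natDegree ≤ n + 1) (hQ : Q.natDegree ≤ n)
    (hPfac : P = P₁ * D) (hQfac : Q = Q₁ * D)
    (hD : D.Monic) (hcop : IsCoprime P₁ Q₁)
    (z : Fin (2 * n) → ℂ) (hz : Function.Injective z)
    (hroot : ∀ j, (derivative P * Q - P * derivative Q).eval (z j) = 0) :
    D = 1 ∨ ∃ c : ℂ, P = C c * Q := by
  classical
  rcases eq_or_ne D 1 with hD1 | hD1
  · exact Or.inl hD1
  right
  have hDne : D ≠ 0 := hD.ne_zero
  have hc : 1 ≤ D.natDegree := by
    rcases Nat.eq_zero_or_pos D.natDegree with h | h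
    · exact absurd ((hD.natDegree_eq_zero).mp h) hD1
    · exact h
  have hP₁ne : P₁ ≠ 0 := fun h => hPne (by simp [hPfac, h])
  have hQ₁ne : Q₁ ≠ 0 := fun h => hQne (by simp [hQfac, h])
  set W := derivative P * Q - P * derivative Q with hWdef
  set V := derivative P₁ * Q₁ - P₁ * derivative Q₁ with hVdef
  have hWV : W = D ^ 2 * V := by
    rw [hWdef, hVdef, hPfac, hQfac]
    simp only [derivative_mul]
    ring
  -- degree bound: natDegree W ≤ 2n
  have hdegW : W.natDegree ≤ 2 * n := by
    refine le_trans (natDegree_sub_le _ _) (max_le ?_ ?_)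
    · refine le_trans natDegree_mul_le ?_
      have := Polynomial.natDegree_derivative_le P
      omega
    · refine le_trans natDegree_mul_le ?_
      have := Polynomial.natDegree_derivative_le Q
      omega
  -- W vanishes identically
  have hW0 : W = 0 := by
    by_contra hWne
    -- the 2n distinct points are roots of W
    have hsub : (Finset.image z Finset.univ).val ≤ W.roots := by
      refine (Multiset.le_iff_subset (Finset.image z Finset.univ).nodup).mpr ?_
      intro x hx
      simp only [Finset.mem_val, Finset.mem_image, Finset.mem_univ, true_and] at hx
      obtain ⟨j, rfl⟩ := hx
      exact (Polynomial.mem_roots hWne).mpr (hroot j)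
    have hcardim : (Finset.image z Finset.univ).card = 2 * n := by
      rw [Finset.card_image_of_injective _ hz, Finset.card_univ, Fintype.card_fin]
    have hcardroots : Multiset.card W.roots ≤ 2 * n :=
      le_trans (Polynomial.card_roots' W) hdegW
    have heq : (Finset.image z Finset.univ).val = W.roots := by
      refine Multiset.eq_of_le_of_card_le hsub ?_
      rw [Finset.card_def] at hcardim
      omega
    have hnodup : W.roots.Nodup := by
      rw [← heq]; exact (Finset.image z Finset.univ).nodup
    -- D has a root α, of multiplicity ≥ 2 in W
    obtain ⟨α, hα⟩ := Complex.exists_root (f := D)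
      (Polynomial.natDegree_pos_iff_degree_pos.mp hc)
    have hdvd2 : (X - C α) ^ 2 ∣ W := by
      rw [hWV]
      exact dvd_mul_of_dvd_left
        (pow_dvd_pow_of_dvd ((Polynomial.dvd_iff_isRoot).mpr hα) 2) V
    have h2le : 2 ≤ rootMultiplicity α W :=
      (Polynomial.le_rootMultiplicity_iff hWne).mpr hdvd2
    have hcount : Multiset.count α W.roots ≤ 1 :=
      (Multiset.nodup_iff_count_le_one.mp hnodup) α
    rw [Polynomial.count_roots] at hcount
    omega
  -- hence V = 0
  have hV0 : V = 0 := by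
    rcases mul_eq_zero.mp (hWV ▸ hW0) with h | h
    · exact absurd h (pow_ne_zero 2 hDne)
    · exact h
  have hVeq : derivative P₁ * Q₁ = P₁ * derivative Q₁ := by
    have := sub_eq_zero.mp (hVdef ▸ hV0)
    exact this
  -- Q₁ divides its own derivative, hence derivative Q₁ = 0
  have hdvdQ : Q₁ ∣ derivative Q₁ := by
    refine hcop.symm.dvd_of_dvd_mul_left ?_
    exact ⟨derivative P₁, by rw [← hVeq]; ring⟩
  have hQ₁' : derivative Q₁ = 0 := by
    by_contra h
    have h1 : Q₁.natDegree ≤ (derivative Q₁).natDegree :=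
      Polynomial.natDegree_le_of_dvd hdvdQ h
    have h2 : (derivative Q₁).natDegree < Q₁.natDegree := by
      refine Polynomial.natDegree_derivative_lt ?_
      intro h0
      exact h (by rw [Polynomial.eq_C_of_natDegree_eq_zero h0]; simp)
    omega
  have hP₁' : derivative P₁ = 0 := by
    have : derivative P₁ * Q₁ = 0 := by rw [hVeq, hQ₁', mul_zero]
    rcases mul_eq_zero.mp this with h | h
    · exact h
    · exact absurd h hQ₁ne
  have hP₁C : P₁ = C (P₁.coeff 0) :=
    Polynomial.eq_C_of_natDegree_eq_zero
      (Polynomial.natDegree_eq_zero_of_derivative_eq_zero hP₁')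
  have hQ₁C : Q₁ = C (Q₁.coeff 0) :=
    Polynomial.eq_C_of_natDegree_eq_zero
      (Polynomial.natDegree_eq_zero_of_derivative_eq_zero hQ₁')
  have hq : Q₁.coeff 0 ≠ 0 := by
    intro h
    apply hQ₁ne
    rw [hQ₁C, h, map_zero]
  rw [hP₁C] at hPfac
  rw [hQ₁C] at hQfac
  refine ⟨P₁.coeff 0 / Q₁.coeff 0, ?_⟩
  rw [hPfac, hQfac, ← mul_assoc, ← C_mul, div_mul_cancel₀ _ hq]
end

section
/- Let P and Q be polynomials with deg P = n+1 and deg Q = n such that the Wronskian P'Q − PQ' has 2n distinct simple roots η_1, …, η_{2n}, and assume the values ζ_j := P(η_j)/Q(η_j) are well-defined (Q(η_j) ≠ 0) and pairwise distinct. Then for each j, the polynomial P − ζ_j·Q has η_j as a root of multiplicity exactly 2, and all its other roots are simple; in particular, P − ζ_j·Q has exactly n distinct roots. -/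
/-!
The Wronskian `W(Q, R) = Q R' - Q' R` is the same for `R = P` and for `R = P - c Q`. At a root
`a` of `R` with `Q(a) ≠ 0`, the term `Q R'` vanishes to order exactly `mult_a R - 1` (characteristic
zero) while `Q' R` vanishes to order at least `mult_a R`, so `W` vanishes to order exactly
`mult_a R - 1`. Hence the simple root `η_j` of `W` is a double root of `P - ζ_j Q`. Any other
multiple root `x` of `P - ζ_j Q` would be a root of `W`, so `x = η_k` with `ζ_k = ζ_j`, i.e.
`k = j`. Counting the `n + 1` roots with multiplicity leaves `n` distinct ones.
-/

open Polynomial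

namespace Polynomial

variable {R : Type*} [CommRing R]

theorem wronskian_sub_C_mul_right (p q : R[X]) (c : R) :
    wronskian q (p - C c * q) = wronskian q p := by
  simp only [wronskian, derivative_sub, derivative_C_mul]
  ring

theorem rootMultiplicity_sub_eq_of_pow_dvd {u v : R[X]} {a : R} (hu : u ≠ 0)
    (hv : (X - C a) ^ (u.rootMultiplicity a + 1) ∣ v) :
    (u - v).rootMultiplicity a = u.rootMultiplicity a := by
  have hu_ndvd : ¬ (X - C a) ^ (u.rootMultiplicity a + 1) ∣ u :=
    (rootMultiplicity_le_iff hu a _).1 le_rfl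
  have huv : u - v ≠ 0 := by
    rw [sub_ne_zero]; rintro rfl; exact hu_ndvd hv
  apply le_antisymm
  · exact (rootMultiplicity_le_iff huv a _).2 fun h => hu_ndvd (by simpa using dvd_add h hv)
  · exact (le_rootMultiplicity_iff huv).2
      (dvd_sub (pow_rootMultiplicity_dvd u a) ((pow_dvd_pow _ (Nat.le_succ _)).trans hv))

theorem isRoot_wronskian_of_one_lt_rootMultiplicity {p q : R[X]} {a : R}
    (h : 1 < p.rootMultiplicity a) : (wronskian q p).IsRoot a := by
  have hp : p ≠ 0 := by rintro rfl; simp at h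
  obtain ⟨hpa, hp'a⟩ := (one_lt_rootMultiplicity_iff_isRoot hp).1 h
  simp_all [wronskian, IsRoot]

theorem rootMultiplicity_wronskian_of_isRoot [IsDomain R] [CharZero R] {p q : R[X]} {a : R}
    (hp : p.IsRoot a) (hq : q.eval a ≠ 0) :
    (wronskian q p).rootMultiplicity a = p.rootMultiplicity a - 1 := by
  rcases eq_or_ne p 0 with rfl | hp0
  · simp [wronskian_zero_right]
  have hm : 0 < p.rootMultiplicity a := (rootMultiplicity_pos hp0).2 hp
  have hp' : derivative p ≠ 0 := fun h => hp0 <| by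
    rw [eq_C_of_derivative_eq_zero h] at hp ⊢
    simpa using hp
  have hqp'_ne : q * derivative p ≠ 0 := mul_ne_zero (fun h => hq (by simp [h])) hp'
  have hqp' : (q * derivative p).rootMultiplicity a = p.rootMultiplicity a - 1 := by
    rw [rootMultiplicity_mul hqp'_ne,
      rootMultiplicity_eq_zero hq, derivative_rootMultiplicity_of_root hp, zero_add]
  rw [wronskian, ← hqp']
  refine rootMultiplicity_sub_eq_of_pow_dvd hqp'_ne ?_
  rw [hqp', Nat.sub_add_cancel hm]
  exact dvd_mul_of_dvd_right (pow_rootMultiplicity_dvd p a) _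

theorem eval_sub_C_mul_eq_zero_iff {K : Type*} [Field K] {p q : K[X]} {c x : K}
    (hq : q.eval x ≠ 0) : (p - C c * q).eval x = 0 ↔ p.eval x / q.eval x = c := by
  rw [eval_sub, eval_mul, eval_C, sub_eq_zero, div_eq_iff hq]

end Polynomial

theorem Multiset.card_toFinset_add_one_of_count_eq_two {α : Type*} [DecidableEq α]
    {s : Multiset α} {a : α} (ha : s.count a = 2) (h : ∀ x ∈ s, x ≠ a → s.count x = 1) :
    s.toFinset.card + 1 = Multiset.card s := by
  have ha_mem : a ∈ s.toFinset := Multiset.mem_toFinset.2 (Multiset.count_pos.1 (by omega))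
  rw [← Multiset.toFinset_sum_count_eq, ← Finset.add_sum_erase _ _ ha_mem,
    Finset.sum_congr rfl fun x hx =>
      h x (Multiset.mem_toFinset.1 (Finset.mem_of_mem_erase hx)) (Finset.ne_of_mem_erase hx),
    Finset.sum_const, smul_eq_mul, mul_one, Finset.card_erase_of_mem ha_mem, ha]
  have := Finset.card_pos.2 ⟨a, ha_mem⟩
  omega

theorem critical_value_multiplicities_general (n : ℕ)
    (P Q : Polynomial ℂ)
    (hP : P.natDegree = n + 1) (hQ : Q.natDegree = n)
    (η : Fin (2 * n) → ℂ)
    (hroots : ∀ x : ℂ, (derivative P * Q - P * derivative Q).eval x = 0 ↔ ∃ j, x = η j)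
    (hsimple : ∀ j, (derivative P * Q - P * derivative Q).rootMultiplicity (η j) = 1)
    (hQη : ∀ j, Q.eval (η j) ≠ 0)
    (ζ : Fin (2 * n) → ℂ) (hζdef : ∀ j, ζ j = P.eval (η j) / Q.eval (η j))
    (hζ : Function.Injective ζ) :
    ∀ j, (P - C (ζ j) * Q).rootMultiplicity (η j) = 2 ∧
      (∀ x : ℂ, (P - C (ζ j) * Q).eval x = 0 → x ≠ η j →
        (P - C (ζ j) * Q).rootMultiplicity x = 1) ∧
      (P - C (ζ j) * Q).roots.toFinset.card = n := by
  intro j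
  have hW : derivative P * Q - P * derivative Q = wronskian Q (P - C (ζ j) * Q) := by
    rw [wronskian_sub_C_mul_right, wronskian]; ring
  rw [hW] at hroots hsimple
  set R := P - C (ζ j) * Q
  have hRdeg : R.natDegree = n + 1 := by
    rw [natDegree_sub_eq_left_of_natDegree_lt, hP]
    exact (natDegree_C_mul_le _ _).trans_lt (by omega)
  have hR0 : R ≠ 0 := ne_zero_of_natDegree_gt (n := 0) (by omega)
  have hRη : R.IsRoot (η j) := (eval_sub_C_mul_eq_zero_iff (hQη j)).2 (hζdef j).symm
  have hdouble : R.rootMultiplicity (η j) = 2 := by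
    have hmult := hsimple j
    rw [rootMultiplicity_wronskian_of_isRoot hRη (hQη j)] at hmult
    have := (rootMultiplicity_pos hR0).2 hRη
    omega
  have hsimple' : ∀ x, R.eval x = 0 → x ≠ η j → R.rootMultiplicity x = 1 := by
    intro x hx hne
    have := (rootMultiplicity_pos hR0).2 hx
    by_contra h1
    obtain ⟨k, rfl⟩ :=
      (hroots x).1 (isRoot_wronskian_of_one_lt_rootMultiplicity (by omega))
    exact hne (congrArg η (hζ ((hζdef k).trans ((eval_sub_C_mul_eq_zero_iff (hQη k)).1 hx))))
  refine ⟨hdouble, hsimple', ?_⟩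
  have := Multiset.card_toFinset_add_one_of_count_eq_two (s := R.roots) (a := η j)
    (by rw [count_roots, hdouble])
    fun x hx hne => by rw [count_roots]; exact hsimple' x ((mem_roots hR0).1 hx) hne
  rw [IsAlgClosed.card_roots_eq_natDegree, hRdeg] at this
  omega

theorem critical_value_multiplicities (n : ℕ) (hn : 1 ≤ n)
    (P Q : Polynomial ℂ) (hcop : IsCoprime P Q)
    (hP : P.natDegree = n + 1) (hQ : Q.natDegree = n)
    (η : Fin (2 * n) → ℂ) (hη : Function.Injective η)
    (hroots : ∀ x : ℂ, (derivative P * Q - P * derivative Q).eval x = 0 ↔ ∃ j, x = η j)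
    (hsimple : ∀ j, (derivative P * Q - P * derivative Q).rootMultiplicity (η j) = 1)
    (hQη : ∀ j, Q.eval (η j) ≠ 0)
    (ζ : Fin (2 * n) → ℂ) (hζdef : ∀ j, ζ j = P.eval (η j) / Q.eval (η j))
    (hζ : Function.Injective ζ) :
    ∀ j, (P - C (ζ j) * Q).rootMultiplicity (η j) = 2 ∧
      (∀ x : ℂ, (P - C (ζ j) * Q).eval x = 0 → x ≠ η j →
        (P - C (ζ j) * Q).rootMultiplicity x = 1) ∧
      (P - C (ζ j) * Q).roots.toFinset.card = n :=
  critical_value_multiplicities_general n P Q hP hQ η hroots hsimple hQη ζ hζdef hζ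
end
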